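/- arXiv:2503.14321 — 2 statements merged into one kernel-verified Lean document; each statement's English description precedes it below -/
import Mathlib

section
/- Probability integral transform: if Y is a real-valued random variable whose cumulative distribution function F is continuous on ℝ, then the random variable U := F(Y) is uniformly distributed on the unit interval, i.e., the pushforward of the law of Y under F is the uniform (Lebesgue) probability measure on [0,1]. -/
open MeasureTheory ProbabilityTheory Set Filter Topology

/-! With `ν` the law of `Y`, `F` is the CDF of `ν` and `U` has law `ν.map F`. If `u < 1` is a value
of `F`, the level set `F ⁻¹' {u}` is closed and bounded above (as `F → 1`), so it has a largest
point `t`, and by monotonicity `{F ≤ u} = Iic t`, which has `ν`-mass `F t = u`. By the intermediate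
value theorem every `u ∈ (0, 1)` is a value of `F`; the remaining `u` are trivial. -/

theorem Monotone.preimage_Iic_eq_Iic_of_continuous {α β : Type*}
    [ConditionallyCompleteLinearOrder α] [TopologicalSpace α] [OrderTopology α]
    [LinearOrder β] [TopologicalSpace β] [T1Space β] {F : α → β}
    (hmono : Monotone F) (hcont : Continuous F) {u : β} (hu : u ∈ range F)
    (hbdd : BddAbove (F ⁻¹' {u})) : ∃ t, F t = u ∧ F ⁻¹' Iic u = Iic t := by
  have hmax : sSup (F ⁻¹' {u}) ∈ F ⁻¹' {u} :=
    (isClosed_singleton.preimage hcont).csSup_mem hu hbdd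
  refine ⟨_, hmax, Set.ext fun x => ⟨fun hx => ?_, fun hx => (hmono hx).trans_eq hmax⟩⟩
  by_contra hlt
  have hFx : F x = u := le_antisymm hx (hmax.symm.trans_le (hmono (not_le.mp hlt).le))
  exact hlt (le_csSup hbdd hFx)

namespace ProbabilityTheory

variable (ν : Measure ℝ)

theorem mem_range_cdf_of_continuous (hcont : Continuous (cdf ν)) {u : ℝ} (hu : u ∈ Ioo 0 1) :
    u ∈ range (cdf ν) :=
  mem_range_of_exists_le_of_exists_ge hcont
    ((tendsto_cdf_atBot ν).eventually (eventually_le_nhds hu.1)).exists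
    ((tendsto_cdf_atTop ν).eventually (eventually_ge_nhds hu.2)).exists

variable [IsProbabilityMeasure ν]

theorem measure_cdf_preimage_Iic (hcont : Continuous (cdf ν)) {u : ℝ} (hu : u ∈ range (cdf ν))
    (hu1 : u < 1) : ν (cdf ν ⁻¹' Iic u) = ENNReal.ofReal u := by
  have hbdd : BddAbove (cdf ν ⁻¹' {u}) := by
    obtain ⟨b, hb⟩ := eventually_atTop.mp ((tendsto_cdf_atTop ν).eventually (eventually_gt_nhds hu1))
    refine ⟨b, fun x hx => ?_⟩
    by_contra! hbx
    exact (hb x hbx.le).ne' hx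
  obtain ⟨t, hFt, hpre⟩ := (monotone_cdf ν).preimage_Iic_eq_Iic_of_continuous hcont hu hbdd
  rw [hpre, ← ofReal_cdf, hFt]

theorem map_cdf_eq_volume_restrict_Icc (hcont : Continuous (cdf ν)) :
    ν.map (cdf ν) = volume.restrict (Icc 0 1) := by
  have : IsProbabilityMeasure (ν.map (cdf ν)) :=
    Measure.isProbabilityMeasure_map hcont.measurable.aemeasurable
  refine Measure.ext_of_Iic _ _ fun u => ?_
  rw [Measure.map_apply hcont.measurable measurableSet_Iic, Measure.restrict_apply measurableSet_Iic]
  rcases le_or_gt 1 u with hu1 | hu1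
  · have hpre : cdf ν ⁻¹' Iic u = univ :=
      eq_univ_of_forall fun x => (cdf_le_one ν x).trans hu1
    rw [hpre, measure_univ, inter_eq_right.mpr (Icc_subset_Iic_self.trans (Iic_subset_Iic.mpr hu1)),
      Real.volume_Icc, sub_zero, ENNReal.ofReal_one]
  by_cases hu : u ∈ range (cdf ν)
  · obtain ⟨x, rfl⟩ := hu
    have hinter : Iic (cdf ν x) ∩ Icc 0 1 = Icc 0 (cdf ν x) := by
      ext y
      simp only [mem_inter_iff, mem_Iic, mem_Icc]
      constructor
      · rintro ⟨hyx, hy0, -⟩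
        exact ⟨hy0, hyx⟩
      · rintro ⟨hy0, hyx⟩
        exact ⟨hyx, hy0, hyx.trans hu1.le⟩
    rw [measure_cdf_preimage_Iic ν hcont ⟨x, rfl⟩ hu1, hinter, Real.volume_Icc, sub_zero]
  · have hu0 : u ≤ 0 := not_lt.mp fun h => hu (mem_range_cdf_of_continuous ν hcont ⟨h, hu1⟩)
    have hpre : cdf ν ⁻¹' Iic u = ∅ :=
      eq_empty_of_forall_notMem fun x hx => hu ⟨x, le_antisymm hx (hu0.trans (cdf_nonneg ν x))⟩
    have hnull : volume (Iic u ∩ Icc (0 : ℝ) 1) = 0 :=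
      measure_mono_null (show Iic u ∩ Icc 0 1 ⊆ Icc 0 u from fun y hy => ⟨hy.2.1, hy.1⟩)
        (by rw [Real.volume_Icc, sub_zero, ENNReal.ofReal_eq_zero.mpr hu0])
    rw [hpre, measure_empty, hnull]

end ProbabilityTheory

/-- Probability integral transform: if `Y` is a real random variable whose CDF
`F t = P(Y ≤ t)` is continuous on `ℝ`, then `U = F (Y)` is uniformly distributed on the
unit interval, i.e. the pushforward of the law of `Y` under `F` is Lebesgue measure
restricted to `[0, 1]`. -/
theorem probability_integral_transform
    {Ω : Type*} [MeasurableSpace Ω] (μ : Measure Ω) [IsProbabilityMeasure μ]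
    (Y : Ω → ℝ) (hY : Measurable Y)
    (F : ℝ → ℝ) (hF : ∀ t, F t = (μ {ω | Y ω ≤ t}).toReal)
    (hcont : Continuous F) :
    Measure.map (fun ω => F (Y ω)) μ = volume.restrict (Set.Icc (0 : ℝ) 1) := by
  have : IsProbabilityMeasure (μ.map Y) := Measure.isProbabilityMeasure_map hY.aemeasurable
  have hF_cdf : F = cdf (μ.map Y) := funext fun t => by
    rw [hF, cdf_eq_real, measureReal_def, Measure.map_apply hY measurableSet_Iic]
    rfl
  subst hF_cdf
  exact (Measure.map_map hcont.measurable hY).symm.trans (map_cdf_eq_volume_restrict_Icc _ hcont)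
end

section
/- The weighted Tchebycheff criterion can reach any Pareto-optimal point: let S be a nonempty finite subset of [0, ∞)^K and let u* ∈ S be Pareto-optimal in S with u*_k > 0 for all k. Then, taking the weights ω_k := 1/u*_k, the point u* minimizes max_{1 ≤ k ≤ K} ω_k u_k over u ∈ S. -/
/-- A point `u ∈ S` is Pareto-optimal in `S` if no `v ∈ S` satisfies `v k ≤ u k` for all
`k` and `v j < u j` for some `j`. -/
def ParetoOptimal {K : ℕ} (S : Set (Fin K → ℝ)) (u : Fin K → ℝ) : Prop :=
  u ∈ S ∧ ¬ ∃ v ∈ S, (∀ k, v k ≤ u k) ∧ ∃ j, v j < u j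

/-- The weighted Tchebycheff criterion can reach any Pareto-optimal point: if `S` is a
nonempty finite subset of `[0, ∞)^K` and `u ∈ S` is Pareto-optimal with `u k > 0` for all
`k`, then with weights `ω k = 1 / u k` the point `u` minimizes `max_k ω k * v k` over
`v ∈ S`. -/
theorem paretoOptimal_minimizes_tchebycheff {K : ℕ} (hK : 0 < K)
    (S : Finset (Fin K → ℝ)) (hS : S.Nonempty) (hSnn : ∀ u ∈ S, ∀ k, 0 ≤ u k)
    (u : Fin K → ℝ) (hu : ParetoOptimal (↑S) u) (hupos : ∀ k, 0 < u k) :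
    ∀ v ∈ S, (⨆ k, (u k)⁻¹ * u k) ≤ ⨆ k, (u k)⁻¹ * v k := by
  intro v hv
  haveI : Nonempty (Fin K) := ⟨⟨0, hK⟩⟩
  have hlhs : (⨆ k, (u k)⁻¹ * u k) = 1 := by
    have : ∀ k : Fin K, (u k)⁻¹ * u k = 1 := fun k =>
      inv_mul_cancel₀ (hupos k).ne'
    simp [this]
  rw [hlhs]
  by_contra h
  push_neg at h
  have hlt : ∀ k, (u k)⁻¹ * v k < 1 := fun k =>
    lt_of_le_of_lt (le_ciSup (f := fun k => (u k)⁻¹ * v k) (Set.Finite.bddAbove (Set.finite_range _)) k) h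
  have hvlt : ∀ k, v k < u k := by
    intro k
    have := (inv_mul_lt_one₀ (hupos k)).mp (hlt k)
    linarith [this]
  exact hu.2 ⟨v, hv, fun k => (hvlt k).le, ⟨0, hK⟩, hvlt _⟩
end
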